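/- Let Y ⊆ H and κ < min Y, where jobs are in EDD order. Then g'_κ(Y) = max{ g'_{κ+1}(Y), p(J[1,κ]) − d_κ } and g'_κ(Y ∪ {κ}) = max{ g'_{κ+1}(Y), p(J[1,β]) − p(Y) − d_κ }. -/

import Mathlib

variable {n : ℕ}

/-- completion time of job `j` in the schedule given by the list `l`:
total processing time of the prefix of `l` up to and including `j`. -/
def comp (p : Fin n → ℕ) (l : List (Fin n)) (j : Fin n) : ℕ :=
  ((l.takeWhile fun k => decide (k ≠ j)).map p).sum + p j

/-- the elements of a finset listed in increasing index order. -/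
def sortF (s : Finset (Fin n)) : List (Fin n) := s.sort (· ≤ ·)

/-- a schedule is a permutation of all of the jobs. -/
def IsSchedule (l : List (Fin n)) : Prop := l.Perm (List.finRange n)

/-- the renting period of schedule `l`: from the start of the first r-job to
the completion of the last r-job. -/
def rent (p : Fin n → ℕ) (Jr : Finset (Fin n)) (hJr : Jr.Nonempty)
    (l : List (Fin n)) : ℤ :=
  (Jr.sup' hJr fun j => (comp p l j : ℤ)) -
    (Jr.inf' hJr fun j => (comp p l j : ℤ) - p j)

/-- `H`: the o-jobs with index between `α = min J^r` and `β = max J^r`. -/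
def Hset (Jr : Finset (Fin n)) (hJr : Jr.Nonempty) : Finset (Fin n) :=
  (Finset.Icc (Jr.min' hJr) (Jr.max' hJr)) \ Jr

/-- the five-block sequence `σ_{X,Y}`: blocks `J[1,α-1]`, `X`,
`J[α,β] \ (X ∪ Y)`, `Y`, `J[β+1,n]`, each internally in increasing index
(WSPT resp. EDD) order. -/
def fiveBlock (Jr : Finset (Fin n)) (hJr : Jr.Nonempty)
    (X Y : Finset (Fin n)) : List (Fin n) :=
  sortF (Finset.Iio (Jr.min' hJr)) ++ sortF X ++
    sortF ((Finset.Icc (Jr.min' hJr) (Jr.max' hJr)) \ (X ∪ Y)) ++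
    sortF Y ++ sortF (Finset.Ioi (Jr.max' hJr))

/-- `g'_κ(Y) = max_{j ∈ J[κ,β]} (C_j^{σ_{∅,Y}} - d_j)`. -/
def gDash (p : Fin n → ℕ) (d : Fin n → ℤ) (Jr : Finset (Fin n)) (hJr : Jr.Nonempty)
    (Y : Finset (Fin n)) (κ : Fin n)
    (h : (Finset.Icc κ (Jr.max' hJr)).Nonempty) : ℤ :=
  (Finset.Icc κ (Jr.max' hJr)).sup' h
    (fun j => (comp p (fiveBlock Jr hJr ∅ Y) j : ℤ) - d j)

/-!
Splitting `j = κ` off the maximum over `J[κ,β]` leaves the terms with `κ < j ≤ β`. In `σ_{∅,Y}`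
job `κ` sits in the middle block behind exactly `J[1,κ]`; in `σ_{∅,Y∪{κ}}` it heads the block
of `Y ∪ {κ}` and completes at `p(J[1,β]) - p(Y)`. Jobs of `Y` complete at the same time in
both sequences, and any other `j > κ` completes no later in `σ_{∅,Y∪{κ}}` and no later than
`p(J[1,β]) - p(Y)` in `σ_{∅,Y}`; as `d_κ ≤ d_j`, such `j` never beat `κ` in the maximum.
-/

open Finset

section comp
variable (p : Fin n → ℕ)

lemma comp_cons_self (j : Fin n) (l : List (Fin n)) : comp p (j :: l) j = p j := by
  simp [comp]

lemma comp_cons_of_ne {a j : Fin n} (h : a ≠ j) (l : List (Fin n)) :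
    comp p (a :: l) j = p a + comp p l j := by
  simp [comp, h, add_assoc]

lemma comp_append_of_mem {l₁ : List (Fin n)} (l₂ : List (Fin n)) {j : Fin n} (h : j ∈ l₁) :
    comp p (l₁ ++ l₂) j = comp p l₁ j := by
  induction l₁ with
  | nil => simp at h
  | cons a l ih =>
    rcases eq_or_ne a j with rfl | ha
    · simp only [List.cons_append, comp_cons_self]
    · simp only [List.cons_append, comp_cons_of_ne p ha, ih (by simp_all [eq_comm])]

lemma comp_append_of_not_mem {l₁ : List (Fin n)} (l₂ : List (Fin n)) {j : Fin n}
    (h : j ∉ l₁) :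
    comp p (l₁ ++ l₂) j = (l₁.map p).sum + comp p l₂ j := by
  induction l₁ with
  | nil => simp
  | cons a l ih =>
    have ha : a ≠ j := by rintro rfl; simp at h
    rw [List.cons_append, comp_cons_of_ne p ha, ih (by simp_all), List.map_cons, List.sum_cons,
      add_assoc]

lemma comp_of_pairwise_lt {l : List (Fin n)} (hl : l.Pairwise (· < ·)) {j : Fin n}
    (hj : j ∈ l) :
    comp p l j = ((l.filter (· ≤ j)).map p).sum := by
  induction l with
  | nil => simp at hj
  | cons a l ih =>
    rw [List.pairwise_cons] at hl
    rcases eq_or_ne a j with rfl | ha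
    · have : l.filter (· ≤ a) = [] :=
        List.filter_eq_nil_iff.2 fun b hb => by simpa using hl.1 b hb
      simp [comp_cons_self, this]
    · have hjl : j ∈ l := by simp_all [eq_comm]
      rw [comp_cons_of_ne p ha, List.filter_cons_of_pos (by simpa using (hl.1 j hjl).le),
        List.map_cons, List.sum_cons, ih hl.2 hjl]

@[simp]
lemma mem_sortF {s : Finset (Fin n)} {j : Fin n} : j ∈ sortF s ↔ j ∈ s := mem_sort _

lemma sum_map_sortF (s : Finset (Fin n)) : ((sortF s).map p).sum = ∑ k ∈ s, p k := by
  rw [← sum_map_toList]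
  exact ((sort_perm_toList s _).map p).sum_eq

lemma comp_sortF {s : Finset (Fin n)} {j : Fin n} (hj : j ∈ s) :
    comp p (sortF s) j = ∑ k ∈ s with k ≤ j, p k := by
  have hsorted : (sortF s).Pairwise (· < ·) := (sortedLT_sort s).pairwise
  rw [comp_of_pairwise_lt p hsorted (mem_sortF.2 hj), ← sum_map_sortF]
  refine ((List.perm_of_nodup_nodup_toFinset_eq ((hsorted.imp ne_of_lt).filter _)
    (sort_nodup _ _) ?_).map p).sum_eq
  ext; simp [sortF]

end comp

theorem Finset.sum_Iio_add_sum_Icc_sdiff {α M : Type*} [LinearOrder α] [LocallyFiniteOrderBot α]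
    [LocallyFiniteOrder α] [AddCommMonoid M] (f : α → M) {a b : α} {Z : Finset α}
    (hab : a ≤ b) (hZ : ∀ z ∈ Z, a ≤ z) :
    ∑ k ∈ Iio a, f k + ∑ k ∈ Icc a b \ Z, f k = ∑ k ∈ Iic b \ Z, f k := by
  rw [← sum_union]
  · congr 1
    ext k
    simp only [mem_union, mem_Iio, mem_sdiff, mem_Icc, mem_Iic]
    by_cases hka : k < a
    · exact iff_of_true (.inl hka) ⟨(hka.trans_le hab).le, fun hk => (hZ k hk).not_gt hka⟩
    · simp [hka, not_lt.1 hka]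
  · exact disjoint_left.2 fun k hk hk' => (mem_Iio.1 hk).not_ge (mem_Icc.1 (mem_sdiff.1 hk').1).1

section fiveBlock
variable (p : Fin n → ℕ) (Jr : Finset (Fin n)) (hJr : Jr.Nonempty)

lemma fiveBlock_empty_left (Z : Finset (Fin n)) :
    fiveBlock Jr hJr ∅ Z = sortF (Iio (Jr.min' hJr)) ++
      (sortF (Icc (Jr.min' hJr) (Jr.max' hJr) \ Z) ++ (sortF Z ++ sortF (Ioi (Jr.max' hJr)))) := by
  simp [fiveBlock, sortF]

lemma comp_fiveBlock_of_not_mem {Z : Finset (Fin n)} (hZ : ∀ z ∈ Z, Jr.min' hJr ≤ z)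
    {j : Fin n} (hj : j ∈ Icc (Jr.min' hJr) (Jr.max' hJr)) (hjZ : j ∉ Z) :
    comp p (fiveBlock Jr hJr ∅ Z) j = ∑ k ∈ Iic j \ Z, p k := by
  rw [mem_Icc] at hj
  have hjM : j ∈ Icc (Jr.min' hJr) (Jr.max' hJr) \ Z := by simp [hj, hjZ]
  have hfilter : {k ∈ Icc (Jr.min' hJr) (Jr.max' hJr) \ Z | k ≤ j} =
      Icc (Jr.min' hJr) j \ Z := by
    ext k; simp only [mem_filter, mem_sdiff, mem_Icc]
    constructor
    · rintro ⟨⟨⟨h1, -⟩, h3⟩, h4⟩; exact ⟨⟨h1, h4⟩, h3⟩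
    · rintro ⟨⟨h1, h4⟩, h3⟩; exact ⟨⟨⟨h1, h4.trans hj.2⟩, h3⟩, h4⟩
  rw [fiveBlock_empty_left,
    comp_append_of_not_mem p _ (by simpa only [mem_sortF, mem_Iio, not_lt] using hj.1),
    comp_append_of_mem p _ (mem_sortF.2 hjM), comp_sortF p hjM, sum_map_sortF,
    hfilter, sum_Iio_add_sum_Icc_sdiff p hj.1 hZ]

lemma comp_fiveBlock_of_mem {Z : Finset (Fin n)} (hZ : ∀ z ∈ Z, Jr.min' hJr ≤ z) {j : Fin n}
    (hjZ : j ∈ Z) :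
    comp p (fiveBlock Jr hJr ∅ Z) j =
      ∑ k ∈ Iic (Jr.max' hJr) \ Z, p k + ∑ k ∈ Z with k ≤ j, p k := by
  rw [fiveBlock_empty_left, comp_append_of_not_mem p _
      (by simpa only [mem_sortF, mem_Iio, not_lt] using hZ j hjZ),
    comp_append_of_not_mem p _ (by simp [hjZ]),
    comp_append_of_mem p _ (mem_sortF.2 hjZ), comp_sortF p hjZ, sum_map_sortF,
    sum_map_sortF, ← add_assoc,
    sum_Iio_add_sum_Icc_sdiff p (Jr.min'_le _ (Jr.max'_mem hJr)) hZ]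

variable {Y : Finset (Fin n)} {κ : Fin n}

lemma comp_fiveBlock_of_lt_min (hκ : κ ∈ Icc (Jr.min' hJr) (Jr.max' hJr))
    (hmin : ∀ y ∈ Y, κ < y) :
    comp p (fiveBlock Jr hJr ∅ Y) κ = ∑ k ∈ Iic κ, p k := by
  have hdisj : Disjoint (Iic κ) Y :=
    disjoint_left.2 fun k hk hkY => (hmin k hkY).not_ge (mem_Iic.1 hk)
  rw [comp_fiveBlock_of_not_mem p Jr hJr (fun y hy => (mem_Icc.1 hκ).1.trans (hmin y hy).le)
    hκ fun hκY => (hmin κ hκY).false, sdiff_eq_self_of_disjoint hdisj]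

lemma comp_fiveBlock_insert_self_add_sum (hκ : κ ∈ Icc (Jr.min' hJr) (Jr.max' hJr))
    (hmin : ∀ y ∈ Y, κ < y) (hYβ : Y ⊆ Iic (Jr.max' hJr)) :
    comp p (fiveBlock Jr hJr ∅ (insert κ Y)) κ + ∑ k ∈ Y, p k =
      ∑ k ∈ Iic (Jr.max' hJr), p k := by
  have hκY : κ ∉ Y := fun hκY => (hmin κ hκY).false
  have hYα : ∀ y ∈ Y, Jr.min' hJr ≤ y := fun y hy => (mem_Icc.1 hκ).1.trans (hmin y hy).le
  have hfilter : {k ∈ insert κ Y | k ≤ κ} = {κ} := by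
    ext k
    simp only [mem_filter, mem_insert, mem_singleton]
    exact ⟨fun ⟨hk, hkκ⟩ => hk.resolve_right fun hkY => (hmin k hkY).not_ge hkκ,
      fun hk => ⟨.inl hk, hk.le⟩⟩
  have hκβ : κ ∈ Iic (Jr.max' hJr) \ Y := by simp [hκY, (mem_Icc.1 hκ).2]
  rw [comp_fiveBlock_of_mem p Jr hJr ((forall_mem_insert _ _ _).2 ⟨(mem_Icc.1 hκ).1, hYα⟩)
      (mem_insert_self κ Y), hfilter, sum_singleton, sdiff_insert,
    sum_erase_add _ _ hκβ, sum_sdiff hYβ]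

lemma comp_fiveBlock_insert_of_mem (hκ : κ ∈ Icc (Jr.min' hJr) (Jr.max' hJr))
    (hmin : ∀ y ∈ Y, κ < y) {j : Fin n} (hjY : j ∈ Y) :
    comp p (fiveBlock Jr hJr ∅ (insert κ Y)) j = comp p (fiveBlock Jr hJr ∅ Y) j := by
  have hκY : κ ∉ Y := fun hκY => (hmin κ hκY).false
  have hYα : ∀ y ∈ Y, Jr.min' hJr ≤ y := fun y hy => (mem_Icc.1 hκ).1.trans (hmin y hy).le
  have hκβ : κ ∈ Iic (Jr.max' hJr) \ Y := by simp [hκY, (mem_Icc.1 hκ).2]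
  rw [comp_fiveBlock_of_mem p Jr hJr ((forall_mem_insert _ _ _).2 ⟨(mem_Icc.1 hκ).1, hYα⟩)
      (mem_insert_of_mem hjY), comp_fiveBlock_of_mem p Jr hJr hYα hjY,
    filter_insert, if_pos (hmin j hjY).le, sum_insert (by simp [hκY]),
    sdiff_insert, ← add_assoc, sum_erase_add _ _ hκβ]

lemma comp_fiveBlock_insert_le (hκα : Jr.min' hJr ≤ κ) (hYα : ∀ y ∈ Y, Jr.min' hJr ≤ y)
    {j : Fin n} (hj : j ∈ Icc (Jr.min' hJr) (Jr.max' hJr)) (hjY : j ∉ Y) (hjκ : j ≠ κ) :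
    comp p (fiveBlock Jr hJr ∅ (insert κ Y)) j ≤ comp p (fiveBlock Jr hJr ∅ Y) j := by
  rw [comp_fiveBlock_of_not_mem p Jr hJr ((forall_mem_insert _ _ _).2 ⟨hκα, hYα⟩) hj
      (by simp [hjY, hjκ]), comp_fiveBlock_of_not_mem p Jr hJr hYα hj hjY]
  exact sum_le_sum_of_subset (sdiff_subset_sdiff le_rfl (subset_insert κ Y))

lemma comp_fiveBlock_add_sum_le (hYα : ∀ y ∈ Y, Jr.min' hJr ≤ y)
    (hYβ : Y ⊆ Iic (Jr.max' hJr)) {j : Fin n}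
    (hj : j ∈ Icc (Jr.min' hJr) (Jr.max' hJr)) (hjY : j ∉ Y) :
    comp p (fiveBlock Jr hJr ∅ Y) j + ∑ k ∈ Y, p k ≤ ∑ k ∈ Iic (Jr.max' hJr), p k := by
  rw [comp_fiveBlock_of_not_mem p Jr hJr hYα hj hjY, ← sum_union sdiff_disjoint]
  refine sum_le_sum_of_subset (union_subset ?_ hYβ)
  exact sdiff_subset.trans (Iic_subset_Iic.2 (mem_Icc.1 hj).2)

end fiveBlock

theorem Finset.sup_sup'_congr {ι α : Type*} [SemilatticeSup α] {s : Finset ι} (H : s.Nonempty)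
    {f g : ι → α} {a : α} (h : ∀ i ∈ s, a ⊔ f i = a ⊔ g i) :
    a ⊔ s.sup' H f = a ⊔ s.sup' H g := by
  have key : ∀ f g : ι → α, (∀ i ∈ s, a ⊔ f i = a ⊔ g i) →
      a ⊔ s.sup' H f ≤ a ⊔ s.sup' H g :=
    fun f g h => sup_le le_sup_left <| sup'_le _ _ fun i hi =>
      le_sup_right.trans <| (h i hi).le.trans <| sup_le_sup_left (le_sup' g hi) a
  exact (key f g h).antisymm (key g f fun i hi => (h i hi).symm)

theorem Fin.Ioc_eq_Icc_of_val_eq_add_one {κ κ' : Fin n} (β : Fin n) (h : (κ' : ℕ) = κ + 1) :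
    Ioc κ β = Icc κ' β := by
  ext j
  simp only [mem_Ioc, mem_Icc, Fin.lt_def, Fin.le_def]
  omega

lemma gDash_eq_max (p : Fin n → ℕ) (d : Fin n → ℤ) (Jr : Finset (Fin n)) (hJr : Jr.Nonempty)
    (Z : Finset (Fin n)) {κ κ' : Fin n} (hsucc : (κ' : ℕ) = κ + 1)
    (h1 : (Icc κ (Jr.max' hJr)).Nonempty) (h2 : (Icc κ' (Jr.max' hJr)).Nonempty) :
    gDash p d Jr hJr Z κ h1 =
      max ((comp p (fiveBlock Jr hJr ∅ Z) κ : ℤ) - d κ) (gDash p d Jr hJr Z κ' h2) := by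
  have hIcc : Icc κ (Jr.max' hJr) = insert κ (Icc κ' (Jr.max' hJr)) := by
    rw [← Fin.Ioc_eq_Icc_of_val_eq_add_one _ hsucc, Ioc_insert_left (nonempty_Icc.1 h1)]
  rw [gDash, sup'_congr h1 hIcc fun _ _ => rfl, sup'_insert h2]
  rfl

lemma max_gDash_insert (p : Fin n → ℕ) {d : Fin n → ℤ} (hd : Monotone d)
    (Jr : Finset (Fin n)) (hJr : Jr.Nonempty) {Y : Finset (Fin n)} (hYβ : Y ⊆ Iic (Jr.max' hJr))
    {κ κ' : Fin n} (hκ : κ ∈ Icc (Jr.min' hJr) (Jr.max' hJr)) (hmin : ∀ y ∈ Y, κ < y)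
    (hsucc : (κ' : ℕ) = κ + 1) (h2 : (Icc κ' (Jr.max' hJr)).Nonempty) :
    max ((comp p (fiveBlock Jr hJr ∅ (insert κ Y)) κ : ℤ) - d κ)
        (gDash p d Jr hJr (insert κ Y) κ' h2) =
      max ((comp p (fiveBlock Jr hJr ∅ (insert κ Y)) κ : ℤ) - d κ)
        (gDash p d Jr hJr Y κ' h2) := by
  refine sup_sup'_congr h2 fun j hj => ?_
  rw [← Fin.Ioc_eq_Icc_of_val_eq_add_one _ hsucc, mem_Ioc] at hj
  have hjαβ : j ∈ Icc (Jr.min' hJr) (Jr.max' hJr) :=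
    mem_Icc.2 ⟨(mem_Icc.1 hκ).1.trans hj.1.le, hj.2⟩
  by_cases hjY : j ∈ Y
  · rw [comp_fiveBlock_insert_of_mem p Jr hJr hκ hmin hjY]
  · have hYα : ∀ y ∈ Y, Jr.min' hJr ≤ y := fun y hy => (mem_Icc.1 hκ).1.trans (hmin y hy).le
    have hj_ins := comp_fiveBlock_insert_le p Jr hJr (mem_Icc.1 hκ).1 hYα hjαβ hjY hj.1.ne'
    have hj_sum := comp_fiveBlock_add_sum_le p Jr hJr hYα hYβ hjαβ hjY
    have hκ_sum := comp_fiveBlock_insert_self_add_sum p Jr hJr hκ hmin hYβ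
    have hdκj := hd hj.1.le
    rw [sup_of_le_left (by omega), sup_of_le_left (by omega)]

theorem stmt13_general {n : ℕ} (p : Fin n → ℕ)
    (d : Fin n → ℤ) (hd : Monotone d)
    (Jr : Finset (Fin n)) (hJr : Jr.Nonempty)
    (Y : Finset (Fin n)) (hY : Y ⊆ Hset Jr hJr)
    (κ κ' : Fin n) (hκ : κ ∈ Hset Jr hJr) (hmin : ∀ y ∈ Y, κ < y)
    (hsucc : (κ' : ℕ) = (κ : ℕ) + 1)
    (h1 : (Finset.Icc κ (Jr.max' hJr)).Nonempty)
    (h2 : (Finset.Icc κ' (Jr.max' hJr)).Nonempty) :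
    gDash p d Jr hJr Y κ h1 =
      max (gDash p d Jr hJr Y κ' h2) ((∑ j ∈ Finset.Iic κ, (p j : ℤ)) - d κ) ∧
    gDash p d Jr hJr (Y ∪ {κ}) κ h1 =
      max (gDash p d Jr hJr Y κ' h2)
        ((∑ j ∈ Finset.Iic (Jr.max' hJr), (p j : ℤ)) - (∑ j ∈ Y, (p j : ℤ)) - d κ) := by
  have hκαβ := (mem_sdiff.1 hκ).1
  have hYβ : Y ⊆ Iic (Jr.max' hJr) := fun y hy =>
    mem_Iic.2 (mem_Icc.1 (mem_sdiff.1 (hY hy)).1).2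
  rw [union_singleton, gDash_eq_max p d Jr hJr _ hsucc h1 h2,
    gDash_eq_max p d Jr hJr _ hsucc h1 h2, max_gDash_insert p hd Jr hJr hYβ hκαβ hmin hsucc h2,
    comp_fiveBlock_of_lt_min p Jr hJr hκαβ hmin]
  refine ⟨by push_cast; rw [max_comm], ?_⟩
  rw [max_comm, ← Nat.cast_sum, ← Nat.cast_sum,
    ← comp_fiveBlock_insert_self_add_sum p Jr hJr hκαβ hmin hYβ, Nat.cast_add,
    add_sub_cancel_right]

/-- for `Y ⊆ H` and `κ ∈ H` with `κ < min Y` (jobs in EDD order),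
`g'_κ(Y) = max { g'_{κ+1}(Y), p(J[1,κ]) - d_κ }` and
`g'_κ(Y ∪ {κ}) = max { g'_{κ+1}(Y), p(J[1,β]) - p(Y) - d_κ }`. -/
theorem stmt13 {n : ℕ} (p : Fin n → ℕ) (hp : ∀ j, 0 < p j)
    (d : Fin n → ℤ) (hd : Monotone d)
    (Jr : Finset (Fin n)) (hJr : Jr.Nonempty)
    (Y : Finset (Fin n)) (hY : Y ⊆ Hset Jr hJr)
    (κ κ' : Fin n) (hκ : κ ∈ Hset Jr hJr) (hmin : ∀ y ∈ Y, κ < y)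
    (hsucc : (κ' : ℕ) = (κ : ℕ) + 1)
    (h1 : (Finset.Icc κ (Jr.max' hJr)).Nonempty)
    (h2 : (Finset.Icc κ' (Jr.max' hJr)).Nonempty) :
    gDash p d Jr hJr Y κ h1 =
      max (gDash p d Jr hJr Y κ' h2) ((∑ j ∈ Finset.Iic κ, (p j : ℤ)) - d κ) ∧
    gDash p d Jr hJr (Y ∪ {κ}) κ h1 =
      max (gDash p d Jr hJr Y κ' h2)
        ((∑ j ∈ Finset.Iic (Jr.max' hJr), (p j : ℤ)) - (∑ j ∈ Y, (p j : ℤ)) - d κ) :=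
  stmt13_general p d hd Jr hJr Y hY κ κ' hκ hmin hsucc h1 h2
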